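/- arXiv:1208.5743 — 3 statements merged into one kernel-verified Lean document; each statement's English description precedes it below -/
import Mathlib

section
/- Let K be a closed convex subset of a real Hilbert space H, p ∉ K, p_0 the nearest point of K to p, u the unit vector along p − p_0, and F a closed subspace of H containing u. Then p does not belong to the orthogonal projection of K onto F. -/
open scoped RealInnerProductSpace

/-!
If `q ∈ K` projected onto `p`, then `q - p ⊥ F`, and `p - p₀ = ‖p - p₀‖ • u ∈ F`, so
`⟪p - p₀, q - p⟫ = 0`. On the other hand the variational inequality of the nearest point gives
`⟪p - p₀, q - p₀⟫ ≤ 0`, that is `⟪p - p₀, q - p⟫ ≤ -‖p - p₀‖² < 0`.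
-/

section NearestPoint

variable {E : Type*} [NormedAddCommGroup E] [InnerProductSpace ℝ E]
  {K : Set E} {p p₀ : E}

theorem real_inner_sub_le_zero_of_forall_dist_le (hK : Convex ℝ K) (hp₀ : p₀ ∈ K)
    (hnear : ∀ q ∈ K, dist p p₀ ≤ dist p q) {q : E} (hq : q ∈ K) :
    ⟪p - p₀, q - p₀⟫ ≤ 0 := by
  have : Nonempty K := ⟨⟨p₀, hp₀⟩⟩
  have hinf : ‖p - p₀‖ = ⨅ w : K, ‖p - w‖ :=
    le_antisymm (le_ciInf fun w => by simpa only [dist_eq_norm] using hnear w w.2)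
      (ciInf_le ⟨0, Set.forall_mem_range.mpr fun w : K => norm_nonneg (p - w)⟩ ⟨p₀, hp₀⟩)
  exact (norm_eq_iInf_iff_real_inner_le_zero hK hp₀).mp hinf q hq

theorem real_inner_sub_lt_zero_of_forall_dist_le (hK : Convex ℝ K) (hp : p ∉ K)
    (hp₀ : p₀ ∈ K) (hnear : ∀ q ∈ K, dist p p₀ ≤ dist p q) {q : E} (hq : q ∈ K) :
    ⟪p - p₀, q - p⟫ < 0 := by
  have hne : p - p₀ ≠ 0 := sub_ne_zero.mpr fun h => hp (h ▸ hp₀)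
  have hsplit : ⟪p - p₀, q - p⟫ = ⟪p - p₀, q - p₀⟫ - ‖p - p₀‖ ^ 2 := by
    rw [← real_inner_self_eq_norm_sq, ← inner_sub_right, sub_sub_sub_cancel_right]
  rw [hsplit]
  linarith [real_inner_sub_le_zero_of_forall_dist_le hK hp₀ hnear hq,
    pow_pos (norm_pos_iff.mpr hne) 2]

end NearestPoint

theorem stmt5_general {H : Type*} [NormedAddCommGroup H] [InnerProductSpace ℝ H]
    (K : Set H) (hKconv : Convex ℝ K)
    (p p₀ : H) (hp : p ∉ K) (hp₀K : p₀ ∈ K)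
    (hnear : ∀ q ∈ K, dist p p₀ ≤ dist p q)
    (u : H) (hu : u = ‖p - p₀‖⁻¹ • (p - p₀))
    (F : Submodule ℝ H) [CompleteSpace F]
    (huF : u ∈ F) :
    p ∉ (fun x => (F.orthogonalProjectionOnto x : H)) '' K := by
  rintro ⟨q, hqK, hqp⟩
  have hdirF : p - p₀ ∈ F := by
    have hne : ‖p - p₀‖ ≠ 0 := norm_ne_zero_iff.mpr (sub_ne_zero.mpr fun h => hp (h ▸ hp₀K))
    simpa only [hu, smul_smul, mul_inv_cancel₀ hne, one_smul] using F.smul_mem ‖p - p₀‖ huF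
  have hqF : q - p ∈ Fᗮ := by
    simpa only [Submodule.starProjection_apply, hqp] using F.sub_starProjection_mem_orthogonal q
  exact (real_inner_sub_lt_zero_of_forall_dist_le hKconv hp hp₀K hnear hqK).ne
    (F.inner_right_of_mem_orthogonal hdirF hqF)

/-- If `K` is a nonempty closed convex subset of a real Hilbert space, `p ∉ K`, `p₀` the
nearest point of `K` to `p`, `u` the unit vector along `p - p₀`, and `F` a closed subspace
containing `u` and `p`, then `p` is not in the orthogonal projection of `K` onto `F`. -/
theorem stmt5 {H : Type*} [NormedAddCommGroup H] [InnerProductSpace ℝ H] [CompleteSpace H]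
    (K : Set H) (hKc : IsClosed K) (hKconv : Convex ℝ K)
    (p p₀ : H) (hp : p ∉ K) (hp₀K : p₀ ∈ K)
    (hnear : ∀ q ∈ K, dist p p₀ ≤ dist p q)
    (u : H) (hu : u = ‖p - p₀‖⁻¹ • (p - p₀))
    (F : Submodule ℝ H) (hFc : IsClosed (F : Set H)) [CompleteSpace F]
    (huF : u ∈ F) (hpF : p ∈ F) :
    p ∉ (fun x => (F.orthogonalProjectionOnto x : H)) '' K :=
  stmt5_general K hKconv p p₀ hp hp₀K hnear u hu F huF
end

section
/- Let X and Y be topological vector spaces with X a dense linear subspace of Y, and let T : Y → ℝ^n be a surjective continuous linear map. Then for every c ∈ ℝ^n, the set T^{-1}(c) ∩ X is dense in T^{-1}(c). -/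
/-!
Since `T` is continuous and surjective, `T(X)` is dense in `ℝⁿ`; being a finite-dimensional
subspace it is closed, so `T(X) = ℝⁿ`. A linear right inverse `s : ℝⁿ → X` of `T` is then
automatically continuous, and the continuous map `y ↦ y - s (T y - c)` fixes the fibre
`T⁻¹{c}` pointwise while sending `X` into `T⁻¹{c} ∩ X`. It therefore carries the density of
`X` over to the density of `T⁻¹{c} ∩ X` in `T⁻¹{c}`.
-/

section

variable {𝕜 Y E : Type*} [NontriviallyNormedField 𝕜]
  [AddCommGroup Y] [Module 𝕜 Y] [TopologicalSpace Y]
  [AddCommGroup E] [Module 𝕜 E] [TopologicalSpace E] [IsTopologicalAddGroup E]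

theorem Submodule.map_eq_top_of_dense [CompleteSpace 𝕜] [ContinuousSMul 𝕜 E] [T2Space E]
    [FiniteDimensional 𝕜 E] {X : Submodule 𝕜 Y} (hX : Dense (X : Set Y)) (T : Y →L[𝕜] E)
    (hT : Function.Surjective T) :
    X.map (T : Y →ₗ[𝕜] E) = ⊤ := by
  have hdense : Dense ((X.map (T : Y →ₗ[𝕜] E) : Submodule 𝕜 E) : Set E) := by
    simpa only [Submodule.map_coe, ContinuousLinearMap.coe_coe] using
      hT.denseRange.dense_image T.continuous hX
  refine SetLike.coe_injective ?_
  rw [Submodule.top_coe, ← (Submodule.closed_of_finiteDimensional _).closure_eq,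
    hdense.closure_eq]

theorem ContinuousLinearMap.exists_rightInverse_mem_of_dense [CompleteSpace 𝕜]
    [IsTopologicalAddGroup Y] [ContinuousSMul 𝕜 Y] [ContinuousSMul 𝕜 E] [T2Space E]
    [FiniteDimensional 𝕜 E]
    {X : Submodule 𝕜 Y} (hX : Dense (X : Set Y)) (T : Y →L[𝕜] E)
    (hT : Function.Surjective T) :
    ∃ s : E →L[𝕜] Y, (∀ v, s v ∈ X) ∧ ∀ v, T (s v) = v := by
  have hrange : ((T : Y →ₗ[𝕜] E).domRestrict X).range = ⊤ := by
    rw [LinearMap.range_domRestrict, Submodule.map_eq_top_of_dense hX T hT]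
  obtain ⟨g, hg⟩ := LinearMap.exists_rightInverse_of_surjective _ hrange
  refine ⟨LinearMap.toContinuousLinearMap (X.subtype ∘ₗ g), fun v => (g v).2, fun v => ?_⟩
  exact LinearMap.congr_fun hg v

theorem ContinuousLinearMap.preimage_singleton_subset_closure_inter [IsTopologicalAddGroup Y]
    {X : Submodule 𝕜 Y} (hX : Dense (X : Set Y)) (T : Y →L[𝕜] E) (s : E →L[𝕜] Y)
    (hsX : ∀ v, s v ∈ X) (hTs : ∀ v, T (s v) = v) (c : E) :
    T ⁻¹' {c} ⊆ closure (T ⁻¹' {c} ∩ (X : Set Y)) := by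
  set φ : Y → Y := fun y => y - s (T y - c)
  have hφ : Continuous φ := by fun_prop
  have hφX : Set.MapsTo φ X (T ⁻¹' {c} ∩ X) := fun y hy =>
    ⟨by simp [φ, hTs], X.sub_mem hy (hsX _)⟩
  intro y (hy : T y = c)
  simpa [φ, hy] using map_mem_closure hφ (hX y) hφX

end

theorem stmt10_general {Y : Type*} [AddCommGroup Y] [Module ℝ Y] [TopologicalSpace Y]
    [IsTopologicalAddGroup Y] [ContinuousSMul ℝ Y]
    (X : Submodule ℝ Y) (hX : Dense (X : Set Y))
    (n : ℕ)
    (T : Y →L[ℝ] (Fin n → ℝ)) (hT : Function.Surjective T)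
    (c : Fin n → ℝ) :
    T ⁻¹' {c} ⊆ closure (T ⁻¹' {c} ∩ (X : Set Y)) := by
  obtain ⟨s, hsX, hTs⟩ := T.exists_rightInverse_mem_of_dense hX hT
  exact T.preimage_singleton_subset_closure_inter hX s hsX hTs c

/-- If `X` is a dense linear subspace of a topological vector space `Y` and
`T : Y → ℝⁿ` is a surjective continuous linear map, then for every `c ∈ ℝⁿ` the set
`T ⁻¹ {c} ∩ X` is dense in `T ⁻¹ {c}`. -/
theorem stmt10 {Y : Type*} [AddCommGroup Y] [Module ℝ Y] [TopologicalSpace Y]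
    [IsTopologicalAddGroup Y] [ContinuousSMul ℝ Y]
    (X : Submodule ℝ Y) (hX : Dense (X : Set Y))
    (n : ℕ) (hn : 0 < n)
    (T : Y →L[ℝ] (Fin n → ℝ)) (hT : Function.Surjective T)
    (c : Fin n → ℝ) :
    T ⁻¹' {c} ⊆ closure (T ⁻¹' {c} ∩ (X : Set Y)) :=
  stmt10_general X hX n T hT c
end

section
/- Let B be a real Banach space and H a real Hilbert space that is a dense linear subspace of B with continuous inclusion. If L is a closed codimension-one subspace of B, then M = L ∩ H is a closed codimension-one subspace of H, the closure of M in B equals L, and M is the unique closed codimension-one subspace of H whose closure in B is L. -/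
/-!
Write `L = ker f` and `g = f ∘ j`, so that `M = ker g`. Since `j` has dense range and `f ≠ 0`,
`g ≠ 0`; fix `x` with `g x = 1`. The continuous map `b ↦ b - f b • j x` fixes `ker f` and sends
`range j` into `j '' ker g`, so the density of `range j` in `B` forces `j '' ker g` to be dense
in `ker f`. Uniqueness holds because kernels of nonzero functionals are coatoms: a closed
hyperplane `N` with `closure (j '' N) = L` satisfies `N ≤ M`, hence `N = M`.
-/

namespace ContinuousLinearMap

variable {𝕜 E F : Type*} [Field 𝕜] [TopologicalSpace 𝕜] [T2Space 𝕜]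
  [AddCommGroup E] [TopologicalSpace E] [Module 𝕜 E]
  [AddCommGroup F] [TopologicalSpace F] [Module 𝕜 F]

theorem comp_ne_zero_of_denseRange {f : F →L[𝕜] 𝕜} (hf : f ≠ 0) {j : E →L[𝕜] F}
    (hj : DenseRange j) : f.comp j ≠ 0 := by
  intro hfj
  refine hf (ext fun b ↦ ?_)
  exact congrFun (hj.equalizer f.continuous continuous_const (funext fun x ↦ congr($hfj x))) b

theorem closure_image_ker_comp [ContinuousSub F] [ContinuousSMul 𝕜 F]
    {f : F →L[𝕜] 𝕜} (hf : f ≠ 0) {j : E →L[𝕜] F} (hj : DenseRange j) :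
    closure (j '' (LinearMap.ker (f.comp j : E →ₗ[𝕜] 𝕜) : Set E)) =
      (LinearMap.ker (f : F →ₗ[𝕜] 𝕜) : Set F) := by
  have hker_closed : IsClosed (LinearMap.ker (f : F →ₗ[𝕜] 𝕜) : Set F) :=
    isClosed_eq f.continuous continuous_const
  refine (closure_minimal ?_ hker_closed).antisymm fun b hb ↦ ?_
  · rintro _ ⟨x, hx, rfl⟩
    exact hx
  obtain ⟨x, hx⟩ : ∃ x, f (j x) = 1 := by
    obtain ⟨x₀, hx₀⟩ : ∃ x₀, f.comp j x₀ ≠ 0 := by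
      by_contra! h
      exact comp_ne_zero_of_denseRange hf hj (ext h)
    exact ⟨(f (j x₀))⁻¹ • x₀, by simpa using inv_mul_cancel₀ hx₀⟩
  set P : F → F := fun b ↦ b - f b • j x
  have hP : Continuous P := continuous_id.sub (f.continuous.smul continuous_const)
  have hPb : P b = b := by
    simp only [P, show f b = 0 from hb, zero_smul, sub_zero]
  have hP_range : P '' Set.range j ⊆ j '' (LinearMap.ker (f.comp j : E →ₗ[𝕜] 𝕜) : Set E) := by
    rintro _ ⟨_, ⟨y, rfl⟩, rfl⟩
    refine ⟨y - f (j y) • x, ?_, by simp [P]⟩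
    simp [hx]
  rw [← hPb]
  refine closure_mono hP_range (image_closure_subset_closure_image hP ⟨b, ?_, rfl⟩)
  simp [hj.closure_range]

end ContinuousLinearMap

theorem LinearMap.ker_eq_of_ker_le {K V : Type*} [DivisionRing K] [AddCommGroup V]
    [Module K V] {g g' : V →ₗ[K] K} (hg : g ≠ 0) (hg' : g' ≠ 0) (h : ker g' ≤ ker g) :
    ker g' = ker g :=
  ((isCoatom_ker_of_surjective (surjective_of_ne_zero hg')).le_iff_eq
    (mt ker_eq_top.mp hg)).mp h |>.symm

theorem stmt13_general {B H : Type*}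
    [NormedAddCommGroup B] [NormedSpace ℝ B]
    [NormedAddCommGroup H] [InnerProductSpace ℝ H]
    (j : H →L[ℝ] B) (hdense : DenseRange j)
    (L : Submodule ℝ B)
    (hL : ∃ f : B →L[ℝ] ℝ, f ≠ 0 ∧ L = LinearMap.ker (f : B →ₗ[ℝ] ℝ))
    (M : Submodule ℝ H) (hM : M = L.comap (j : H →ₗ[ℝ] B)) :
    IsClosed (M : Set H) ∧
    (∃ g : H →L[ℝ] ℝ, g ≠ 0 ∧ M = LinearMap.ker (g : H →ₗ[ℝ] ℝ)) ∧
    closure (j '' (M : Set H)) = (L : Set B) ∧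
    (∀ N : Submodule ℝ H, IsClosed (N : Set H) →
      (∃ g : H →L[ℝ] ℝ, g ≠ 0 ∧ N = LinearMap.ker (g : H →ₗ[ℝ] ℝ)) →
      closure (j '' (N : Set H)) = (L : Set B) → N = M) := by
  obtain ⟨f, hf, rfl⟩ := hL
  have hMker : M = LinearMap.ker (f.comp j : H →ₗ[ℝ] ℝ) := hM
  have hg : f.comp j ≠ 0 := f.comp_ne_zero_of_denseRange hf hdense
  refine ⟨hMker ▸ (f.comp j).isClosed_ker, ⟨f.comp j, hg, hMker⟩,
    hMker ▸ f.closure_image_ker_comp hf hdense, ?_⟩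
  rintro N - ⟨g', hg', hN⟩ hNcl
  have hNM : N ≤ M := fun x hx ↦ by
    rw [hM, Submodule.mem_comap, ← SetLike.mem_coe, ← hNcl]
    exact subset_closure ⟨x, hx, rfl⟩
  rw [hN, hMker] at hNM ⊢
  exact LinearMap.ker_eq_of_ker_le (by exact_mod_cast hg) (by exact_mod_cast hg') hNM

/-- Let `B` be a real Banach space and `H` a real Hilbert space densely and continuously
included in `B` (via an injective continuous linear map `j` with dense range). If `L` is a
closed codimension-one subspace of `B` (the kernel of a nonzero continuous functional),
then `M = L ∩ H` is a closed codimension-one subspace of `H`, the closure of `M` in `B`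
is `L`, and `M` is the unique such subspace of `H` with closure `L`. -/
theorem stmt13 {B H : Type*}
    [NormedAddCommGroup B] [NormedSpace ℝ B] [CompleteSpace B]
    [NormedAddCommGroup H] [InnerProductSpace ℝ H] [CompleteSpace H]
    (j : H →L[ℝ] B) (hj : Function.Injective j) (hdense : DenseRange j)
    (L : Submodule ℝ B) (hLc : IsClosed (L : Set B))
    (hL : ∃ f : B →L[ℝ] ℝ, f ≠ 0 ∧ L = LinearMap.ker (f : B →ₗ[ℝ] ℝ))
    (M : Submodule ℝ H) (hM : M = L.comap (j : H →ₗ[ℝ] B)) :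
    IsClosed (M : Set H) ∧
    (∃ g : H →L[ℝ] ℝ, g ≠ 0 ∧ M = LinearMap.ker (g : H →ₗ[ℝ] ℝ)) ∧
    closure (j '' (M : Set H)) = (L : Set B) ∧
    (∀ N : Submodule ℝ H, IsClosed (N : Set H) →
      (∃ g : H →L[ℝ] ℝ, g ≠ 0 ∧ N = LinearMap.ker (g : H →ₗ[ℝ] ℝ)) →
      closure (j '' (N : Set H)) = (L : Set B) → N = M) :=
  stmt13_general j hdense L hL M hM
end
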